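/- arXiv:0811.1935 — 2 statements merged into one kernel-verified Lean document; each statement's English description precedes it below -/
import Mathlib

section
/- Let F: [0,∞) → [0,∞) be non-decreasing and tending to infinity with right-continuous inverse F⁻¹. If there exists a > 0 with F⁻¹(s·x) ≤ 2^a s^a F⁻¹(x) for all s,x ≥ 1, then F satisfies the reverse lower bound: F(s·x) ≥ (1/2) s^{1/a} F(x) for all s ≥ 2^a and all x ≥ F⁻¹(1). -/
/-!
Write `G = F⁻¹` and `t = s^(1/a) / 2`, so that `2^a t^a = s`. It suffices that every `w` with
`F x ≤ w < t F x` lies below `F (s x)`. Split `w = r u` with `1 ≤ r < t` and `u ≥ 1`, `u < F x`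
(or `u = 1`); then `G u ≤ x`, and doubling gives `G w ≤ 2^a r^a G u < s x`, i.e. `w < F (s x)`.
The bound `G 1 ≤ x` with `G 1 > 0` supplies the strictness, since it makes `x > 0`.
-/

open Filter Set

/-- The right-continuous generalized inverse F⁻¹(x) = inf {y ≥ 0 : F(y) > x}. -/
noncomputable def Finv (F : ℝ → ℝ) (x : ℝ) : ℝ := sInf {y : ℝ | 0 ≤ y ∧ x < F y}

section Finv

variable {F : ℝ → ℝ}

theorem Finv_set_nonempty (htop : Tendsto F atTop atTop) (v : ℝ) :
    {y : ℝ | 0 ≤ y ∧ v < F y}.Nonempty :=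
  let ⟨y, hvy, hy⟩ := ((htop.eventually_gt_atTop v).and (eventually_ge_atTop 0)).exists
  ⟨y, hy, hvy⟩

theorem Finv_set_bddBelow (v : ℝ) : BddBelow {y : ℝ | 0 ≤ y ∧ v < F y} :=
  ⟨0, fun _ hy => hy.1⟩

theorem Finv_nonneg (v : ℝ) : 0 ≤ Finv F v :=
  Real.sInf_nonneg fun _ hy => hy.1

theorem Finv_le_of_lt_apply {v z : ℝ} (hz : 0 ≤ z) (hvz : v < F z) : Finv F v ≤ z :=
  csInf_le (Finv_set_bddBelow v) ⟨hz, hvz⟩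

theorem lt_apply_of_Finv_lt (hmono : Monotone F) (htop : Tendsto F atTop atTop) {v z : ℝ}
    (h : Finv F v < z) : v < F z := by
  obtain ⟨y, hy, hyz⟩ := (csInf_lt_iff (Finv_set_bddBelow v) (Finv_set_nonempty htop v)).1 h
  exact hy.2.trans_le (hmono hyz.le)

theorem Finv_monotone (htop : Tendsto F atTop atTop) : Monotone (Finv F) := fun _ _ hvw =>
  csInf_le_csInf (Finv_set_bddBelow _) (Finv_set_nonempty htop _)
    fun _ hy => ⟨hy.1, hvw.trans_lt hy.2⟩

/-- If `F⁻¹ 1 = 0`, doubling forces `F⁻¹ u = 0` for all `u ≥ 1`, so `F 1` would exceed all `u`. -/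
theorem Finv_one_pos (hmono : Monotone F) (htop : Tendsto F atTop atTop) {c : ℝ → ℝ}
    (hdbl : ∀ s, 1 ≤ s → Finv F s ≤ c s * Finv F 1) : 0 < Finv F 1 := by
  refine (Finv_nonneg 1).lt_of_ne fun h0 => ?_
  have hlt : max 1 (F 1) < F 1 := by
    refine lt_apply_of_Finv_lt hmono htop ?_
    calc Finv F (max 1 (F 1)) ≤ c (max 1 (F 1)) * Finv F 1 := hdbl _ (le_max_left _ _)
      _ < 1 := by rw [← h0, mul_zero]; exact one_pos
  exact hlt.not_ge (le_max_right _ _)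

theorem lt_apply_mul_of_Finv_le (hmono : Monotone F) (htop : Tendsto F atTop atTop) {a : ℝ}
    (hdbl : ∀ s x : ℝ, 1 ≤ s → 1 ≤ x → Finv F (s * x) ≤ (2 : ℝ) ^ a * s ^ a * Finv F x)
    {r u x s : ℝ} (hr : 1 ≤ r) (hu : 1 ≤ u) (hx : 0 < x) (hux : Finv F u ≤ x)
    (hrs : (2 : ℝ) ^ a * r ^ a < s) : r * u < F (s * x) := by
  refine lt_apply_of_Finv_lt hmono htop ?_
  calc Finv F (r * u) ≤ 2 ^ a * r ^ a * Finv F u := hdbl r u hr hu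
    _ ≤ 2 ^ a * r ^ a * x := by gcongr
    _ < s * x := by gcongr

end Finv

theorem one_le_inv_two_mul_rpow_one_div {a s : ℝ} (ha : 0 < a) (hs : (2 : ℝ) ^ a ≤ s) :
    1 ≤ 2⁻¹ * s ^ (1 / a) := by
  have h2 : (2 : ℝ) ≤ s ^ (1 / a) := by
    calc (2 : ℝ) = ((2 : ℝ) ^ a) ^ (1 / a) := by
          rw [one_div, Real.rpow_rpow_inv zero_le_two ha.ne']
      _ ≤ s ^ (1 / a) := by gcongr
  linarith

theorem two_rpow_mul_rpow_lt {a s r : ℝ} (ha : 0 < a) (hs : 0 ≤ s) (hr : 0 ≤ r)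
    (hrs : r < 2⁻¹ * s ^ (1 / a)) : (2 : ℝ) ^ a * r ^ a < s := by
  calc (2 : ℝ) ^ a * r ^ a = (2 * r) ^ a := (Real.mul_rpow zero_le_two hr).symm
    _ < (s ^ (1 / a)) ^ a := by gcongr; linarith
    _ = s := by rw [one_div, Real.rpow_inv_rpow hs ha.ne']

theorem F_lower_bound_of_Finv_doubling_general (F : ℝ → ℝ)
    (hmono : Monotone F)
    (htop : Filter.Tendsto F Filter.atTop Filter.atTop)
    (a : ℝ) (ha : 0 < a)
    (hdbl : ∀ s x : ℝ, 1 ≤ s → 1 ≤ x →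
      Finv F (s * x) ≤ (2 : ℝ) ^ a * s ^ a * Finv F x) :
    ∀ s x : ℝ, (2 : ℝ) ^ a ≤ s → Finv F 1 ≤ x → 0 ≤ x →
      2⁻¹ * s ^ (1 / a) * F x ≤ F (s * x) := by
  intro s x hs hx hx0
  have hFinv1 : 0 < Finv F 1 :=
    Finv_one_pos hmono htop fun s hs => by simpa using hdbl s 1 hs le_rfl
  have hxpos : 0 < x := hFinv1.trans_le hx
  have ht := one_le_inv_two_mul_rpow_one_div ha hs
  have hs1 : 1 ≤ s := (Real.one_le_rpow one_le_two ha.le).trans hs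
  refine le_of_forall_lt fun w hw => ?_
  rcases lt_or_ge w (F x) with hwF | hFw
  · exact hwF.trans_le (hmono (le_mul_of_one_le_left hx0 hs1))
  have hFx : 0 < F x := by nlinarith
  have hwt : w / F x < 2⁻¹ * s ^ (1 / a) := (div_lt_iff₀ hFx).2 hw
  obtain ⟨r, hwr, hrt⟩ := exists_between hwt
  have hr : 1 ≤ r := ((one_le_div hFx).2 hFw).trans hwr.le
  have hwrF : w / r < F x :=
    (div_lt_iff₀ (by linarith)).2 (by rwa [div_lt_iff₀ hFx, mul_comm] at hwr)
  have hux : Finv F (max 1 (w / r)) ≤ x := by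
    rw [(Finv_monotone htop).map_max]
    exact max_le hx (Finv_le_of_lt_apply hx0 hwrF)
  calc w = r * (w / r) := (mul_div_cancel₀ w (by linarith)).symm
    _ ≤ r * max 1 (w / r) := by gcongr; exact le_max_right _ _
    _ < F (s * x) := lt_apply_mul_of_Finv_le hmono htop hdbl hr (le_max_left _ _) hxpos hux
        (two_rpow_mul_rpow_lt ha (by linarith) (by linarith) hrt)

/-- If F⁻¹(s·x) ≤ 2^a s^a F⁻¹(x) for all s, x ≥ 1, then
F(s·x) ≥ (1/2) s^(1/a) F(x) for all s ≥ 2^a and x ≥ F⁻¹(1). -/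
theorem F_lower_bound_of_Finv_doubling (F : ℝ → ℝ)
    (hmono : Monotone F) (hF0 : ∀ x, 0 ≤ x → 0 ≤ F x)
    (htop : Filter.Tendsto F Filter.atTop Filter.atTop)
    (a : ℝ) (ha : 0 < a)
    (hdbl : ∀ s x : ℝ, 1 ≤ s → 1 ≤ x →
      Finv F (s * x) ≤ (2 : ℝ) ^ a * s ^ a * Finv F x) :
    ∀ s x : ℝ, (2 : ℝ) ^ a ≤ s → Finv F 1 ≤ x → 0 ≤ x →
      2⁻¹ * s ^ (1 / a) * F x ≤ F (s * x) :=
  F_lower_bound_of_Finv_doubling_general F hmono htop a ha hdbl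
end

section
/- Let μ be a finite Borel measure on (∂U, δ), and g: (0,r₀) → (0,∞) right-continuous, non-decreasing, with lim_{r→0} g(r) = 0 and g(2r) ≤ C·g(r) for some C > 1. If A ⊆ ∂U is a Borel set such that limsup_{r→0} μ(B(u,r))/g(r) ≥ 1 for every u ∈ A, then H_g(A) ≤ C·μ(A). -/
open Filter Set

/-- The boundary ∂U: infinite sequences of positive integers. -/
abbrev pU := ℕ → ℕ+

-- δ(u,v) = exp(-|u∧v|), where |u∧v| is the length of the longest common
-- prefix of u and v; δ(u,u) = 0.
open Classical in
noncomputable def delta (u v : pU) : ℝ :=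
  if h : u = v then 0 else Real.exp (-(Nat.find (Function.ne_iff.mp h) : ℝ))

/-- Open ball in (∂U, δ). -/
def dball (u : pU) (r : ℝ) : Set pU := {v | delta u v < r}

open ENNReal MeasureTheory in
instance : MeasurableSpace ℕ+ := ⊤

/-- Diameter of a subset of ∂U for the metric δ, valued in [0,∞]. -/
noncomputable def ediam (A : Set pU) : ENNReal :=
  ⨆ u ∈ A, ⨆ v ∈ A, ENNReal.ofReal (delta u v)

/-- g(diam S), with the convention that sets of null diameter contribute 0. -/
noncomputable def gaugeOf (g : ℝ → ℝ) (S : Set pU) : ENNReal :=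
  if ediam S = 0 then 0 else ENNReal.ofReal (g (ediam S).toReal)

/-- Pre-measure: infimum of Σ g(diam Cₙ) over countable covers by sets of
diameter at most ε. -/
noncomputable def Hpre (g : ℝ → ℝ) (ε : ℝ) (A : Set pU) : ENNReal :=
  ⨅ (C : ℕ → Set pU) (_ : A ⊆ ⋃ n, C n)
    (_ : ∀ n, ediam (C n) ≤ ENNReal.ofReal ε), ∑' n, gaugeOf g (C n)

/-- The g-Hausdorff measure H_g on (∂U, δ). -/
noncomputable def Hmeas (g : ℝ → ℝ) (A : Set pU) : ENNReal :=
  ⨆ (ε : ℝ) (_ : 0 < ε), Hpre g ε A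

/-!
Balls of `δ` are cylinders, and two cylinders are either nested or disjoint. Fix `a < 1`, `ε > 0`
and an open `U ⊇ A`. Since the upper density is `≥ 1 > a`, every `u ∈ A` lies in a cylinder `S`
inside `U`, of diameter at most `ε`, with `a · g(diam S) ≤ μ S`. The shortest such cylinders
around the points of `A` form a countable disjoint cover of `A`, whence `a · H_g^ε(A) ≤ μ U`.
Letting `a → 1` and using outer regularity gives `H_g(A) ≤ μ A ≤ C · μ A`.
-/

open MeasureTheory PiNat Real
open scoped ENNReal

namespace PiNat

variable {α : Type*}

theorem countable_range_cylinder [Countable α] :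
    (Set.range fun p : (ℕ → α) × ℕ => cylinder p.1 p.2).Countable := by
  refine (Set.countable_range fun l : List α => {y | res y l.length = l}).mono ?_
  rintro _ ⟨⟨x, n⟩, rfl⟩
  exact ⟨res x n, by simp only [cylinder_eq_res, res_length]⟩

theorem cylinder_eq_of_le_of_inter_nonempty {x y : ℕ → α} {m n : ℕ} (h : m ≤ n)
    (hxy : (cylinder x m ∩ cylinder y n).Nonempty) : cylinder y m = cylinder x m := by
  obtain ⟨w, hwx, hwy⟩ := hxy
  exact (mem_cylinder_iff_eq.1 (cylinder_anti y h hwy)).symm.trans (mem_cylinder_iff_eq.1 hwx)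

/-- Vitali covering for cylinders: take around each point the shortest cylinder with property `P`. -/
theorem exists_pairwise_disjoint_cylinder_cover (P : Set (ℕ → α) → Prop) {A : Set (ℕ → α)}
    (h : ∀ x ∈ A, ∃ n, P (cylinder x n)) :
    ∃ D : Set (Set (ℕ → α)), D ⊆ Set.range (fun p : (ℕ → α) × ℕ => cylinder p.1 p.2) ∧
      D.Pairwise Disjoint ∧ (∀ S ∈ D, P S) ∧ A ⊆ ⋃₀ D := by
  classical
  let N : (ℕ → α) → ℕ := fun x => if hx : x ∈ A then Nat.find (h x hx) else 0
  have hN : ∀ x ∈ A, P (cylinder x (N x)) := fun x hx => by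
    simp only [N, dif_pos hx]
    exact Nat.find_spec (h x hx)
  have hN_min : ∀ x ∈ A, ∀ n, P (cylinder x n) → N x ≤ n := fun x hx n hn => by
    simp only [N, dif_pos hx]
    exact Nat.find_min' (h x hx) hn
  have nested : ∀ x ∈ A, ∀ y ∈ A, N x ≤ N y →
      (cylinder x (N x) ∩ cylinder y (N y)).Nonempty → cylinder y (N y) = cylinder x (N x) := by
    intro x hx y hy hle hxy
    have hyx := cylinder_eq_of_le_of_inter_nonempty hle hxy
    have : N y = N x := le_antisymm (hN_min y hy _ (hyx ▸ hN x hx)) hle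
    rw [this, hyx]
  refine ⟨(fun x => cylinder x (N x)) '' A, ?_, ?_, ?_, ?_⟩
  · rintro _ ⟨x, -, rfl⟩
    exact ⟨(x, N x), rfl⟩
  · rintro _ ⟨x, hx, rfl⟩ _ ⟨y, hy, rfl⟩ hne
    rw [Set.disjoint_iff_inter_eq_empty, ← Set.not_nonempty_iff_eq_empty]
    intro hxy
    rcases le_total (N x) (N y) with hle | hle
    · exact hne (nested x hx y hy hle hxy).symm
    · exact hne (nested y hy x hx hle (Set.inter_comm _ _ ▸ hxy))
  · rintro _ ⟨x, hx, rfl⟩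
    exact hN x hx
  · intro x hx
    exact ⟨_, ⟨x, hx, rfl⟩, self_mem_cylinder x _⟩

end PiNat

theorem delta_eq_of_ne {u v : pU} (h : u ≠ v) : delta u v = exp (-(firstDiff u v : ℝ)) := by
  rw [delta, dif_neg h, firstDiff_def, dif_pos h]
  congr

theorem delta_le_of_mem_cylinder {u v : pU} {n : ℕ} (h : v ∈ cylinder u n) :
    delta u v ≤ exp (-(n : ℝ)) := by
  by_cases huv : u = v
  · rw [delta, dif_pos huv]
    positivity
  rw [delta_eq_of_ne huv, exp_le_exp, neg_le_neg_iff, Nat.cast_le, firstDiff_comm]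
  exact (mem_cylinder_iff_le_firstDiff (Ne.symm huv) n).1 h

theorem exists_cylinder_eq_dball (u : pU) {r : ℝ} (hr : 0 < r) :
    ∃ n : ℕ, cylinder u n = dball u r ∧ exp (-(n : ℝ)) < r := by
  classical
  have hex : ∃ n : ℕ, exp (-(n : ℝ)) < r := by
    obtain ⟨n, hn⟩ := exists_nat_gt (-log r)
    exact ⟨n, (lt_log_iff_exp_lt hr).1 (by linarith)⟩
  refine ⟨Nat.find hex, ?_, Nat.find_spec hex⟩
  ext v
  by_cases hvu : v = u
  · subst hvu
    simp [dball, delta, hr]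
  simp only [dball, Set.mem_ofPred_eq, delta_eq_of_ne (Ne.symm hvu),
    mem_cylinder_iff_le_firstDiff hvu, firstDiff_comm v u, Nat.find_le_iff]
  constructor
  · rintro ⟨m, hm, hlt⟩
    exact (exp_le_exp.2 (by simpa using hm)).trans_lt hlt
  · exact fun h => ⟨_, le_rfl, h⟩

theorem ediam_cylinder_le (u : pU) (n : ℕ) :
    ediam (cylinder u n) ≤ ENNReal.ofReal (exp (-(n : ℝ))) := by
  refine iSup₂_le fun v hv => iSup₂_le fun w hw => ENNReal.ofReal_le_ofReal ?_
  rw [mem_cylinder_iff_eq] at hv hw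
  exact delta_le_of_mem_cylinder (mem_cylinder_iff_eq.2 (hw.trans hv.symm))

theorem gaugeOf_empty (g : ℝ → ℝ) : gaugeOf g ∅ = 0 := by
  simp [gaugeOf, ediam]

theorem gaugeOf_le_of_ediam_le {g : ℝ → ℝ} {r0 t : ℝ} (hg : MonotoneOn g (Set.Ioo 0 r0))
    (ht : t ∈ Set.Ioo 0 r0) {S : Set pU} (hS : ediam S ≤ ENNReal.ofReal t) :
    gaugeOf g S ≤ ENNReal.ofReal (g t) := by
  unfold gaugeOf
  split_ifs with h0
  · exact zero_le
  have hpos : 0 < (ediam S).toReal :=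
    ENNReal.toReal_pos h0 (ne_top_of_le_ne_top ENNReal.ofReal_ne_top hS)
  have hle : (ediam S).toReal ≤ t := ENNReal.toReal_le_of_le_ofReal ht.1.le hS
  exact ENNReal.ofReal_le_ofReal (hg ⟨hpos, hle.trans_lt ht.2⟩ ht hle)

theorem Hpre_le_tsum_gaugeOf {ι : Type*} [Countable ι] (g : ℝ → ℝ) (ε : ℝ) {A : Set pU}
    (s : ι → Set pU) (hA : A ⊆ ⋃ i, s i) (hs : ∀ i, ediam (s i) ≤ ENNReal.ofReal ε) :
    Hpre g ε A ≤ ∑' i, gaugeOf g (s i) := by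
  have := Encodable.ofCountable ι
  have hcover : A ⊆ ⋃ n, ⋃ i ∈ Encodable.decode₂ ι n, s i := by
    rwa [Encodable.iUnion_decode₂]
  have hdiam : ∀ n, ediam (⋃ i ∈ Encodable.decode₂ ι n, s i) ≤ ENNReal.ofReal ε := fun n =>
    Encodable.iUnion_decode₂_cases (by simp [ediam]) hs
  calc Hpre g ε A ≤ ∑' n, gaugeOf g (⋃ i ∈ Encodable.decode₂ ι n, s i) :=
        iInf_le_of_le _ (iInf_le_of_le hcover (iInf_le _ hdiam))
    _ = ∑' i, gaugeOf g (s i) := tsum_iUnion_decode₂ _ (gaugeOf_empty g) s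

theorem mul_Hpre_le_of_forall_exists_cylinder (μ : Measure pU) (g : ℝ → ℝ) (ε : ℝ)
    {a : ℝ≥0∞} {A U : Set pU}
    (h : ∀ u ∈ A, ∃ n, cylinder u n ⊆ U ∧ ediam (cylinder u n) ≤ ENNReal.ofReal ε ∧
      a * gaugeOf g (cylinder u n) ≤ μ (cylinder u n)) :
    a * Hpre g ε A ≤ μ U := by
  obtain ⟨D, hD_cyl, hD_disj, hD_good, hAD⟩ := exists_pairwise_disjoint_cylinder_cover
    (fun S => S ⊆ U ∧ ediam S ≤ ENNReal.ofReal ε ∧ a * gaugeOf g S ≤ μ S) h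
  have hD_count : D.Countable := countable_range_cylinder.mono hD_cyl
  have hD_meas : ∀ S ∈ D, MeasurableSet S := fun S hS => by
    obtain ⟨⟨x, n⟩, rfl⟩ := hD_cyl hS
    exact (isOpen_cylinder _ x n).measurableSet
  have := hD_count.to_subtype
  calc a * Hpre g ε A ≤ a * ∑' S : D, gaugeOf g S := by
        gcongr
        exact Hpre_le_tsum_gaugeOf g ε _ (by rwa [← Set.sUnion_eq_iUnion])
          fun S => (hD_good S S.2).2.1
    _ = ∑' S : D, a * gaugeOf g S := ENNReal.tsum_mul_left.symm
    _ ≤ ∑' S : D, μ S := ENNReal.tsum_le_tsum fun S => (hD_good S S.2).2.2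
    _ = μ (⋃₀ D) := (measure_sUnion hD_count hD_disj hD_meas).symm
    _ ≤ μ U := measure_mono (Set.sUnion_subset fun S hS => (hD_good S hS).1)

theorem exists_cylinder_of_one_le_limsup {r0 ε : ℝ} {g : ℝ → ℝ} (hr0 : 0 < r0) (hε : 0 < ε)
    (hg_mono : MonotoneOn g (Set.Ioo 0 r0)) {μ : Measure pU} {u : pU}
    (hden : 1 ≤ Filter.limsup (fun r : ℝ => μ (dball u r) / ENNReal.ofReal (g r))
      (nhdsWithin 0 (Set.Ioi 0)))
    {a : ℝ≥0∞} (ha : a < 1) {U : Set pU} (hU : IsOpen U) (hu : u ∈ U) :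
    ∃ n, cylinder u n ⊆ U ∧ ediam (cylinder u n) ≤ ENNReal.ofReal ε ∧
      a * gaugeOf g (cylinder u n) ≤ μ (cylinder u n) := by
  obtain ⟨m, hm⟩ : ∃ m, cylinder u m ⊆ U := by
    obtain ⟨_, ⟨x, m, rfl⟩, hux, hsub⟩ :=
      (isTopologicalBasis_cylinders _).exists_subset_of_mem_open hu hU
    exact ⟨m, (mem_cylinder_iff_eq.1 hux).le.trans hsub⟩
  have hc : 0 < min (min ε r0) (exp (-(m : ℝ))) := by positivity
  obtain ⟨r, hratio, hr_pos, hr_lt⟩ := ((frequently_lt_of_lt_limsup (by isBoundedDefault)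
    (ha.trans_le hden)).and_eventually (Ioo_mem_nhdsGT hc)).exists
  simp only [lt_min_iff] at hr_lt
  obtain ⟨⟨hr_ε, hr_r0⟩, hr_m⟩ := hr_lt
  obtain ⟨n, hn_eq, hn_lt⟩ := exists_cylinder_eq_dball u hr_pos
  have hmn : m ≤ n := by
    have := exp_lt_exp.1 (hn_lt.trans hr_m)
    exact_mod_cast (show (m : ℝ) < n by linarith).le
  have hdiam : ediam (cylinder u n) ≤ ENNReal.ofReal r :=
    (ediam_cylinder_le u n).trans (ENNReal.ofReal_le_ofReal hn_lt.le)
  refine ⟨n, (cylinder_anti u hmn).trans hm, hdiam.trans (ENNReal.ofReal_le_ofReal hr_ε.le), ?_⟩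
  calc a * gaugeOf g (cylinder u n) ≤ a * ENNReal.ofReal (g r) := by
        gcongr
        exact gaugeOf_le_of_ediam_le hg_mono ⟨hr_pos, hr_r0⟩ hdiam
    _ ≤ μ (cylinder u n) := hn_eq ▸ (ENNReal.mul_lt_of_lt_div hratio).le

theorem Hmeas_le_measure_of_one_le_limsup {r0 : ℝ} {g : ℝ → ℝ} (hr0 : 0 < r0)
    (hg_mono : MonotoneOn g (Set.Ioo 0 r0)) (μ : Measure pU) [IsFiniteMeasure μ] (A : Set pU)
    (hden : ∀ u ∈ A, 1 ≤ Filter.limsup (fun r : ℝ => μ (dball u r) / ENNReal.ofReal (g r))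
      (nhdsWithin 0 (Set.Ioi 0))) :
    Hmeas g A ≤ μ A := by
  refine iSup₂_le fun ε hε => ?_
  rw [Set.measure_eq_iInf_isOpen A μ]
  refine le_iInf₂ fun U hAU => le_iInf fun hU => ENNReal.le_of_forall_lt_one_mul_le fun a ha => ?_
  exact mul_Hpre_le_of_forall_exists_cylinder μ g ε fun u hu =>
    exists_cylinder_of_one_le_limsup hr0 hε hg_mono (hden u hu) ha hU (hAU hu)

open MeasureTheory in
theorem Hmeas_le_of_upper_density_ge_general
    (r0 C : ℝ) (hr0 : 0 < r0) (hC : 1 < C) (g : ℝ → ℝ)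
    (hg_mono : MonotoneOn g (Set.Ioo 0 r0))
    (μ : Measure pU) [IsFiniteMeasure μ]
    (A : Set pU)
    (hden : ∀ u ∈ A, 1 ≤ Filter.limsup (fun r : ℝ => μ (dball u r) / ENNReal.ofReal (g r))
        (nhdsWithin 0 (Set.Ioi 0))) :
    Hmeas g A ≤ ENNReal.ofReal C * μ A :=
  (Hmeas_le_measure_of_one_le_limsup hr0 hg_mono μ A hden).trans
    (le_mul_of_one_le_left' (ENNReal.one_le_ofReal.2 hC.le))

open MeasureTheory in
/-- Rogers–Taylor: if limsup μ(B(u,r))/g(r) ≥ 1 on A, then H_g(A) ≤ C μ(A). -/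
theorem Hmeas_le_of_upper_density_ge
    (r0 C : ℝ) (hr0 : 0 < r0) (hC : 1 < C) (g : ℝ → ℝ)
    (hg_pos : ∀ r ∈ Set.Ioo 0 r0, 0 < g r)
    (hg_mono : MonotoneOn g (Set.Ioo 0 r0))
    (hg_rc : ∀ r ∈ Set.Ioo 0 r0, ContinuousWithinAt g (Set.Ici r) r)
    (hg_lim : Filter.Tendsto g (nhdsWithin 0 (Set.Ioi 0)) (nhds 0))
    (hg_dbl : ∀ r : ℝ, 0 < r → r < r0 / 2 → g (2 * r) ≤ C * g r)
    (μ : Measure pU) [IsFiniteMeasure μ]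
    (A : Set pU) (hA : MeasurableSet A)
    (hden : ∀ u ∈ A, 1 ≤ Filter.limsup (fun r : ℝ => μ (dball u r) / ENNReal.ofReal (g r))
        (nhdsWithin 0 (Set.Ioi 0))) :
    Hmeas g A ≤ ENNReal.ofReal C * μ A :=
  Hmeas_le_of_upper_density_ge_general r0 C hr0 hC g hg_mono μ A hden
end
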